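/- arXiv:1503.06588 — 7 statements merged into one kernel-verified Lean document; each statement's English description precedes it below -/
import Mathlib

section
/- Let y < z < x be real numbers such that (a+b)z = ax + by for some nonnegative integers a, b. Then there exists a finite sequence (z_1, ..., z_{a+b}) of real numbers which has exactly a terms equal to x and exactly b terms equal to y, such that for all k = 1, ..., a+b, we have |z_1 + ... + z_k - kz| ≤ x - y. -/
/-!
Put `θ = a / (a + b)` and let the `i`-th term be `x` exactly when `⌈i θ⌉` increases from `i` to
`i + 1`, and `y` otherwise (the upper mechanical word of slope `θ`). Since `0 ≤ θ ≤ 1` the ceiling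
grows by `0` or `1` per step, so the first `k` terms contain `⌈k θ⌉` copies of `x`. As
`z = y + θ (x - y)`, the `k`-th partial sum minus `k z` is `(⌈k θ⌉ - k θ) (x - y) ∈ [0, x - y)`.
-/

open Finset

section UpperMechanical

variable {θ : ℝ}

theorem natCeil_succ_mul_eq_or (hθ0 : 0 ≤ θ) (hθ1 : θ ≤ 1) (k : ℕ) :
    ⌈((k : ℝ) + 1) * θ⌉₊ = ⌈(k : ℝ) * θ⌉₊ ∨ ⌈((k : ℝ) + 1) * θ⌉₊ = ⌈(k : ℝ) * θ⌉₊ + 1 := by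
  have hle : ⌈(k : ℝ) * θ⌉₊ ≤ ⌈((k : ℝ) + 1) * θ⌉₊ := Nat.ceil_mono (by nlinarith)
  have hle_succ : ⌈((k : ℝ) + 1) * θ⌉₊ ≤ ⌈(k : ℝ) * θ⌉₊ + 1 := by
    rw [← Nat.ceil_add_one (by positivity)]
    exact Nat.ceil_mono (by nlinarith)
  omega

noncomputable def upperMechanical (θ : ℝ) {α : Type*} (x y : α) (i : ℕ) : α :=
  if ⌈(i : ℝ) * θ⌉₊ < ⌈((i : ℝ) + 1) * θ⌉₊ then x else y

variable {α : Type*} {x y : α}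

theorem upperMechanical_eq_left_iff (hxy : x ≠ y) (i : ℕ) :
    upperMechanical θ x y i = x ↔ ⌈(i : ℝ) * θ⌉₊ < ⌈((i : ℝ) + 1) * θ⌉₊ := by
  unfold upperMechanical; split_ifs with h <;> simp [h, hxy.symm]

theorem card_filter_upperMechanical_eq_left [DecidableEq α] (hθ0 : 0 ≤ θ) (hθ1 : θ ≤ 1) (hxy : x ≠ y)
    (k : ℕ) :
    #{i ∈ range k | upperMechanical θ x y i = x} = ⌈(k : ℝ) * θ⌉₊ := by
  simp_rw [upperMechanical_eq_left_iff hxy]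
  induction k with
  | zero => simp
  | succ k ih =>
    rw [range_add_one, filter_insert]
    push_cast
    rcases natCeil_succ_mul_eq_or hθ0 hθ1 k with h | h <;> simp [h, ih]

theorem card_filter_upperMechanical_eq_right [DecidableEq α] (hθ0 : 0 ≤ θ) (hθ1 : θ ≤ 1) (hxy : x ≠ y)
    (k : ℕ) :
    #{i ∈ range k | upperMechanical θ x y i = y} = k - ⌈(k : ℝ) * θ⌉₊ := by
  have hy : ∀ i, upperMechanical θ x y i = y ↔ ¬upperMechanical θ x y i = x := fun i => by
    unfold upperMechanical; split_ifs <;> simp [hxy, hxy.symm]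
  simp_rw [hy, filter_not, card_sdiff_of_subset (filter_subset _ _), card_range,
    card_filter_upperMechanical_eq_left hθ0 hθ1 hxy]

theorem sum_range_upperMechanical (hθ0 : 0 ≤ θ) (hθ1 : θ ≤ 1) {x y : ℝ} (k : ℕ) :
    ∑ i ∈ range k, upperMechanical θ x y i = k * y + ⌈(k : ℝ) * θ⌉₊ * (x - y) := by
  induction k with
  | zero => simp
  | succ k ih =>
    rw [sum_range_succ, ih]
    push_cast
    rcases natCeil_succ_mul_eq_or hθ0 hθ1 k with h | h <;>
      simp only [upperMechanical, h, lt_self_iff_false, lt_add_one, if_true, if_false] <;>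
      push_cast <;> ring

theorem abs_sum_range_upperMechanical_sub_le (hθ0 : 0 ≤ θ) (hθ1 : θ ≤ 1) {x y : ℝ} (hxy : y ≤ x)
    (k : ℕ) : |∑ i ∈ range k, upperMechanical θ x y i - k * (y + θ * (x - y))| ≤ x - y := by
  have hk : 0 ≤ (k : ℝ) * θ := by positivity
  have h0 := Nat.le_ceil ((k : ℝ) * θ)
  have h1 := Nat.ceil_lt_add_one hk
  rw [sum_range_upperMechanical hθ0 hθ1, abs_le]
  constructor <;> nlinarith

end UpperMechanical

/-- Balancing lemma: if `(a+b)z = ax+by` with `y < z < x`, there is an arrangement of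
`a` copies of `x` and `b` copies of `y` whose partial sums stay within `x - y` of `kz`. -/
theorem stmt_0 (x y z : ℝ) (a b : ℕ) (hyz : y < z) (hzx : z < x)
    (havg : ((a : ℝ) + b) * z = a * x + b * y) :
    ∃ zs : ℕ → ℝ,
      ((Finset.range (a + b)).filter (fun i => zs i = x)).card = a ∧
      ((Finset.range (a + b)).filter (fun i => zs i = y)).card = b ∧
      ∀ k : ℕ, 1 ≤ k → k ≤ a + b →
        |(∑ i ∈ Finset.range k, zs i) - k * z| ≤ x - y := by
  set θ : ℝ := a / (a + b) with hθ
  have hθ0 : 0 ≤ θ := by positivity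
  have hθ1 : θ ≤ 1 := div_le_one_of_le₀ (by simp) (by positivity)
  have hxy : x ≠ y := by linarith
  have hceil : ⌈((a + b : ℕ) : ℝ) * θ⌉₊ = a := by
    rcases (a + b).eq_zero_or_pos with h | h
    · simp [Nat.add_eq_zero_iff.mp h]
    · rw [Nat.cast_add, hθ, mul_div_cancel₀ _ (by norm_cast; omega), Nat.ceil_natCast]
  refine ⟨upperMechanical θ x y, ?_, ?_, fun k hk hkn => ?_⟩
  · rw [card_filter_upperMechanical_eq_left hθ0 hθ1 hxy, hceil]
  · rw [card_filter_upperMechanical_eq_right hθ0 hθ1 hxy, hceil]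
    omega
  · have hn : (0 : ℝ) < a + b := by norm_cast; omega
    have hz : z = y + θ * (x - y) := by
      rw [hθ]
      field_simp
      linarith
    rw [hz]
    exact abs_sum_range_upperMechanical_sub_le hθ0 hθ1 (by linarith) k
end

section
/- The sequence (z_k)_{k≥1} constructed by the greedy rule — z_1 = x, and z_{k+1} = y if z_1 + ... + z_k ≥ kz, z_{k+1} = x otherwise — satisfies |z_1 + ... + z_k - kz| ≤ x - y for all k ≥ 1, where y < z < x. -/
/-! The error `e_k = z_1 + ⋯ + z_k - kz` stays in `[y - z, x - z]`: a step from `e ≥ 0` adds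
`y - z < 0` and a step from `e < 0` adds `x - z > 0`, so neither leaves the interval. Both ends
of that interval lie within `x - y` of `0`. -/

open Set

lemma greedy_step_mem_Icc {x y z S c : ℝ} (hyz : y ≤ z) (hzx : z ≤ x)
    (h : S - c ∈ Icc (y - z) (x - z)) :
    S + (if S ≥ c then y else x) - (c + z) ∈ Icc (y - z) (x - z) := by
  rw [mem_Icc] at h ⊢
  split_ifs <;> constructor <;> linarith

lemma abs_le_sub_of_mem_Icc {x y z e : ℝ} (hyz : y ≤ z) (hzx : z ≤ x)
    (h : e ∈ Icc (y - z) (x - z)) : |e| ≤ x - y := by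
  rw [mem_Icc] at h
  rw [abs_le]
  constructor <;> linarith

/-- The greedy sequence `z₁ = x`, `z_{k+1} = y` if the partial sum is `≥ kz` and `x`
otherwise, keeps all partial sums within `x - y` of `kz`. -/
theorem stmt_2 (x y z : ℝ) (hyz : y < z) (hzx : z < x) (zs : ℕ → ℝ)
    (h1 : zs 0 = x)
    (hrec : ∀ k : ℕ, 1 ≤ k →
      zs k = if (∑ i ∈ Finset.range k, zs i) ≥ k * z then y else x) :
    ∀ k : ℕ, 1 ≤ k → |(∑ i ∈ Finset.range k, zs i) - k * z| ≤ x - y := by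
  have error_mem : ∀ k, 1 ≤ k → (∑ i ∈ Finset.range k, zs i) - k * z ∈ Icc (y - z) (x - z) := by
    intro k hk
    induction k, hk using Nat.le_induction with
    | base =>
      simp only [Finset.sum_range_one, h1, Nat.cast_one, one_mul, mem_Icc]
      constructor <;> linarith
    | succ k hk ih =>
      rw [Finset.sum_range_succ, hrec k hk, Nat.cast_succ, add_one_mul]
      exact greedy_step_mem_Icc hyz.le hzx.le ih
  exact fun k hk => abs_le_sub_of_mem_Icc hyz.le hzx.le (error_mem k hk)
end

section
/- Fix α ≥ 0 and define the Grushin quasidistance d_α on ℝ² by d_α((x₁,x₂),(y₁,y₂)) = |x₁ - y₁| + min( |x₂ - y₂|^{1/(1+α)}, |x₂ - y₂| / |x₁|^α ) (interpreting the second term as |x₂-y₂|^{1/(1+α)} when x₁ = 0). Then d_α is a quasimetric: it is symmetric up to a multiplicative constant, vanishes exactly on the diagonal, and satisfies a quasi-triangle inequality d_α(x, z) ≤ C (d_α(x, y) + d_α(y, z)) for a constant C depending only on α. -/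
/-!
Write `t = |x₂ - y₂|` and `r = t ^ (1 / (1 + α))`. Since `r = t / r ^ α`, the vertical part
of `d_α(x, y)` is `t / max(|x₁|, r) ^ α`. At a fixed base point `x₁` it is monotone in `t` and
at most doubles when `t` doubles, which gives the triangle inequality in the second coordinate.
Moving the base point from `x₁` to `y₁` costs at most a factor `2 ^ α` plus `|x₁ - y₁|`: either
`r ≤ |x₁ - y₁|`, or `max(|y₁|, r) ≤ 2 max(|x₁|, r)`.
-/

open Real

/-- The Grushin quasidistance on `ℝ²`; the second entry of the `min` is interpreted
as `+∞` (i.e. dropped) when `x₁ = 0`. -/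
noncomputable def grushinDist (α : ℝ) (x y : ℝ × ℝ) : ℝ :=
  |x.1 - y.1| +
    if x.1 = 0 then |x.2 - y.2| ^ (1 / (1 + α))
    else min (|x.2 - y.2| ^ (1 / (1 + α))) (|x.2 - y.2| / |x.1| ^ α)

noncomputable def grushinVertical (α a t : ℝ) : ℝ :=
  if a = 0 then t ^ (1 / (1 + α)) else min (t ^ (1 / (1 + α))) (t / a ^ α)

theorem grushinDist_eq (α : ℝ) (x y : ℝ × ℝ) :
    grushinDist α x y = |x.1 - y.1| + grushinVertical α |x.1| |x.2 - y.2| := by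
  simp [grushinDist, grushinVertical, abs_eq_zero]

theorem rpow_one_div_one_add_eq_div {α t : ℝ} (hα : 1 + α ≠ 0) (ht : 0 < t) :
    t ^ (1 / (1 + α)) = t / (t ^ (1 / (1 + α))) ^ α := by
  rw [← rpow_mul ht.le, eq_div_iff (rpow_pos_of_pos ht _).ne', ← rpow_add ht]
  conv_rhs => rw [← rpow_one t]
  congr 1
  field_simp

namespace grushinVertical

variable {α a b s t u : ℝ}

theorem le_rpow : grushinVertical α a t ≤ t ^ (1 / (1 + α)) := by
  unfold grushinVertical
  split
  · exact le_rfl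
  · exact min_le_left _ _

theorem nonneg (ha : 0 ≤ a) (ht : 0 ≤ t) : 0 ≤ grushinVertical α a t := by
  unfold grushinVertical
  split
  · exact rpow_nonneg ht _
  · exact le_min (rpow_nonneg ht _) (div_nonneg ht (rpow_nonneg ha _))

theorem eq_zero_iff (hα : 0 ≤ α) (ha : 0 ≤ a) (ht : 0 ≤ t) :
    grushinVertical α a t = 0 ↔ t = 0 := by
  have hp : 1 / (1 + α) ≠ 0 := by positivity
  constructor
  · intro h
    unfold grushinVertical at h
    split at h
    case isTrue => exact (rpow_eq_zero ht hp).1 h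
    case isFalse ha0 =>
      rcases min_eq_iff.1 h with ⟨h, _⟩ | ⟨h, _⟩
      · exact (rpow_eq_zero ht hp).1 h
      · simpa [rpow_eq_zero_iff_of_nonneg ha, ha0] using h
  · rintro rfl
    simp only [grushinVertical, zero_rpow hp, zero_div, min_self, ite_self]

theorem eq_div_max (hα : 0 ≤ α) (ha : 0 ≤ a) (ht : 0 < t) :
    grushinVertical α a t = t / max a (t ^ (1 / (1 + α))) ^ α := by
  have hr : 0 < t ^ (1 / (1 + α)) := rpow_pos_of_pos ht _
  have hroot := rpow_one_div_one_add_eq_div (by positivity) ht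
  unfold grushinVertical
  split
  · subst a
    rwa [max_eq_right hr.le]
  · rcases le_total a (t ^ (1 / (1 + α))) with h | h
    · rw [max_eq_right h, ← hroot, min_eq_left_iff, hroot]
      exact div_le_div_of_nonneg_left ht.le (by positivity) (rpow_le_rpow ha h hα)
    · rw [max_eq_left h, min_eq_right_iff, hroot]
      exact div_le_div_of_nonneg_left ht.le (rpow_pos_of_pos hr _) (rpow_le_rpow hr.le h hα)

theorem mono (hα : 0 ≤ α) (ha : 0 ≤ a) (ht : 0 ≤ t) (htu : t ≤ u) :
    grushinVertical α a t ≤ grushinVertical α a u := by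
  have hroot : t ^ (1 / (1 + α)) ≤ u ^ (1 / (1 + α)) := rpow_le_rpow ht htu (by positivity)
  unfold grushinVertical
  split
  · exact hroot
  · exact min_le_min hroot (div_le_div_of_nonneg_right htu (rpow_nonneg ha α))

theorem two_mul_le (hα : 0 ≤ α) (ht : 0 ≤ t) :
    grushinVertical α a (2 * t) ≤ 2 * grushinVertical α a t := by
  have hroot : (2 * t) ^ (1 / (1 + α)) ≤ 2 * t ^ (1 / (1 + α)) := by
    rw [mul_rpow zero_le_two ht]
    gcongr
    calc (2 : ℝ) ^ (1 / (1 + α)) ≤ 2 ^ (1 : ℝ) :=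
          rpow_le_rpow_of_exponent_le one_le_two (by rw [div_le_one (by positivity)]; linarith)
      _ = 2 := rpow_one 2
  unfold grushinVertical
  split
  · exact hroot
  · rw [mul_min_of_nonneg _ _ zero_le_two, mul_div_assoc]
    exact min_le_min hroot le_rfl

theorem add_le_two_mul (hα : 0 ≤ α) (ha : 0 ≤ a) (ht : 0 ≤ t) (hu : 0 ≤ u) :
    grushinVertical α a (t + u) ≤ 2 * (grushinVertical α a t + grushinVertical α a u) := by
  have hFt := nonneg (α := α) ha ht
  have hFu := nonneg (α := α) ha hu
  rcases le_total t u with h | h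
  · calc grushinVertical α a (t + u) ≤ grushinVertical α a (2 * u) :=
          mono hα ha (by linarith) (by linarith)
      _ ≤ 2 * grushinVertical α a u := two_mul_le hα hu
      _ ≤ _ := by linarith
  · calc grushinVertical α a (t + u) ≤ grushinVertical α a (2 * t) :=
          mono hα ha (by linarith) (by linarith)
      _ ≤ 2 * grushinVertical α a t := two_mul_le hα ht
      _ ≤ _ := by linarith

theorem le_two_rpow_mul_of_le_add (hα : 0 ≤ α) (ha : 0 ≤ a) (hb : 0 ≤ b) (hs : 0 ≤ s)
    (ht : 0 ≤ t) (hbas : b ≤ a + s) :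
    grushinVertical α a t ≤ 2 ^ α * (s + grushinVertical α b t) := by
  have hc : 1 ≤ (2 : ℝ) ^ α := one_le_rpow one_le_two hα
  have hFb := nonneg (α := α) hb ht
  rcases ht.eq_or_lt with rfl | ht
  · rw [(eq_zero_iff hα ha le_rfl).2 rfl]
    positivity
  have hr : 0 < t ^ (1 / (1 + α)) := rpow_pos_of_pos ht _
  generalize hr_def : t ^ (1 / (1 + α)) = r at hr
  rcases le_or_gt r s with hrs | hsr
  · calc grushinVertical α a t ≤ r := hr_def ▸ le_rpow
      _ ≤ s + grushinVertical α b t := by linarith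
      _ ≤ _ := le_mul_of_one_le_left (by positivity) hc
  · have hm : 0 < max a r := lt_max_of_lt_right hr
    have hmax : max b r ≤ 2 * max a r :=
      max_le (by linarith [le_max_left a r, le_max_right a r]) (by linarith [le_max_right a r])
    calc grushinVertical α a t = 2 ^ α * (t / (2 * max a r) ^ α) := by
          rw [eq_div_max hα ha ht, hr_def, mul_rpow zero_le_two hm.le]
          field_simp
      _ ≤ 2 ^ α * grushinVertical α b t := by
          rw [eq_div_max hα hb ht, hr_def]
          gcongr
      _ ≤ _ := by gcongr; linarith

end grushinVertical

theorem abs_le_abs_add_abs_sub (x y : ℝ) : |y| ≤ |x| + |x - y| := by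
  have := abs_sub_abs_le_abs_sub y x
  rw [abs_sub_comm] at this
  linarith

theorem grushinDist_nonneg (α : ℝ) (x y : ℝ × ℝ) : 0 ≤ grushinDist α x y := by
  rw [grushinDist_eq]
  exact add_nonneg (abs_nonneg _) (grushinVertical.nonneg (abs_nonneg _) (abs_nonneg _))

theorem grushinDist_eq_zero_iff {α : ℝ} (hα : 0 ≤ α) {x y : ℝ × ℝ} :
    grushinDist α x y = 0 ↔ x = y := by
  have hV := grushinVertical.nonneg (α := α) (abs_nonneg x.1) (abs_nonneg (x.2 - y.2))
  rw [grushinDist_eq, add_eq_zero_iff_of_nonneg (abs_nonneg _) hV,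
    grushinVertical.eq_zero_iff hα (abs_nonneg _) (abs_nonneg _), abs_eq_zero, abs_eq_zero,
    sub_eq_zero, sub_eq_zero, Prod.ext_iff]

theorem grushinDist_le_mul_swap {α : ℝ} (hα : 0 ≤ α) (x y : ℝ × ℝ) :
    grushinDist α x y ≤ (1 + 2 ^ α) * grushinDist α y x := by
  have hV := grushinVertical.nonneg (α := α) (abs_nonneg y.1) (abs_nonneg (x.2 - y.2))
  have hquasi := grushinVertical.le_two_rpow_mul_of_le_add hα (abs_nonneg x.1) (abs_nonneg y.1)
    (abs_nonneg (x.1 - y.1)) (abs_nonneg (x.2 - y.2)) (abs_le_abs_add_abs_sub x.1 y.1)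
  rw [grushinDist_eq, grushinDist_eq, abs_sub_comm y.1, abs_sub_comm y.2]
  have : 0 ≤ (2 : ℝ) ^ α * |x.1 - y.1| := by positivity
  linarith

theorem grushinDist_triangle {α : ℝ} (hα : 0 ≤ α) (x y z : ℝ × ℝ) :
    grushinDist α x z ≤ (1 + 2 * 2 ^ α) * (grushinDist α x y + grushinDist α y z) := by
  have hVx := grushinVertical.nonneg (α := α) (abs_nonneg x.1) (abs_nonneg (x.2 - y.2))
  have hVy := grushinVertical.nonneg (α := α) (abs_nonneg y.1) (abs_nonneg (y.2 - z.2))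
  have hvert : grushinVertical α |x.1| |x.2 - z.2| ≤
      2 * (grushinVertical α |x.1| |x.2 - y.2| + grushinVertical α |x.1| |y.2 - z.2|) :=
    (grushinVertical.mono hα (abs_nonneg _) (abs_nonneg _) (abs_sub_le _ _ _)).trans
      (grushinVertical.add_le_two_mul hα (abs_nonneg _) (abs_nonneg _) (abs_nonneg _))
  have hbase := grushinVertical.le_two_rpow_mul_of_le_add hα (abs_nonneg x.1) (abs_nonneg y.1)
    (abs_nonneg (x.1 - y.1)) (abs_nonneg (y.2 - z.2)) (abs_le_abs_add_abs_sub x.1 y.1)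
  have hhor := abs_sub_le x.1 y.1 z.1
  rw [grushinDist_eq, grushinDist_eq, grushinDist_eq]
  have : 0 ≤ (2 : ℝ) ^ α * |y.1 - z.1| := by positivity
  have := mul_le_mul_of_nonneg_right (one_le_rpow one_le_two hα) hVx
  linarith

/-- The Grushin quasidistance is a quasimetric. -/
theorem stmt_5 (α : ℝ) (hα : 0 ≤ α) :
    ∃ C : ℝ, 1 ≤ C ∧
      (∀ x y : ℝ × ℝ, grushinDist α x y = 0 ↔ x = y) ∧
      (∀ x y : ℝ × ℝ, grushinDist α x y ≤ C * grushinDist α y x) ∧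
      (∀ x y z : ℝ × ℝ,
        grushinDist α x z ≤ C * (grushinDist α x y + grushinDist α y z)) := by
  have hc : 0 ≤ (2 : ℝ) ^ α := by positivity
  refine ⟨1 + 2 * 2 ^ α, by linarith, fun x y ↦ grushinDist_eq_zero_iff hα, fun x y ↦ ?_,
    grushinDist_triangle hα⟩
  have hd := grushinDist_nonneg α y x
  calc grushinDist α x y ≤ (1 + 2 ^ α) * grushinDist α y x := grushinDist_le_mul_swap hα x y
    _ ≤ (1 + 2 * 2 ^ α) * grushinDist α y x := by gcongr; linarith
end

section
/- Suppose F : ℝ^{N+2} → ℝ^{N+2} is an η-quasisymmetric homeomorphism and λ > 1, α ≥ 0 are such that for every x = (x', x'') ∈ ℝ^{N+1} × ℝ with |x'| ≠ 0, the restriction of |x'|^{α/(1+α)} F to the ball B(x, |x'|/2) is λ-bi-Lipschitz. Then there exists λ' > 1 depending only on λ, η, and a bound on α, such that (λ')^{-1} |x - y|^{1/(1+α)} ≤ |F(x) - F(y)| ≤ λ' |x - y|^{1/(1+α)} for all x = (x', x''), y = (y', y'') with |x'' - y''| ≥ (1/2) max(|x'|, |y'|). -/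
open Metric

/-- Projection of `ℝ^{N+2}` onto its first `N+1` coordinates. -/
def firstCoords (N : ℕ) (x : EuclideanSpace ℝ (Fin (N + 2))) :
    EuclideanSpace ℝ (Fin (N + 1)) := WithLp.toLp 2 (fun i : Fin (N + 1) => x i.castSucc)

/-- The last coordinate of a point of `ℝ^{N+2}`. -/
def lastCoord (N : ℕ) (x : EuclideanSpace ℝ (Fin (N + 2))) : ℝ := x (Fin.last (N + 1))

/-!
Let `d = |x - y|`. The hypothesis on `x, y` puts `x` within `2d` of the axis, so moving `x` by `3d`
in a horizontal direction gives a point `p` with `d ≤ |p'| ≤ 5d`, and a point `v` with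
`|p - v| = d/3` lies in the ball on which `|p'|^{α/(1+α)} F` is `λ`-bi-Lipschitz; hence
`|F p - F v|` is comparable to `d^{1/(1+α)}`. Quasisymmetry, applied to triples such as
`(x, y, p)` and `(p, x, v)` whose distance ratios are bounded, makes `|F x - F y|` comparable to
`|F p - F v|`.
-/

/-- The three-point inequality of an `η`-quasisymmetric map; continuity and bijectivity are not
part of it. -/
def QuasisymmetricWith {X Y : Type*} [PseudoMetricSpace X] [PseudoMetricSpace Y]
    (η : ℝ → ℝ) (F : X → Y) : Prop :=
  ∀ x a b : X, ∀ t : ℝ, 0 < t → dist x a ≤ t * dist x b →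
    dist (F x) (F a) ≤ η t * dist (F x) (F b)

theorem QuasisymmetricWith.dist_le_mul_mul_dist {X Y : Type*} [PseudoMetricSpace X]
    [PseudoMetricSpace Y] {η : ℝ → ℝ} {F : X → Y} (hF : QuasisymmetricWith η F)
    {x y p v : X} {s t : ℝ} (hs : 0 < s) (ht : 0 < t) (hηs : 0 ≤ η s)
    (hxy : dist x y ≤ s * dist x p) (hpx : dist p x ≤ t * dist p v) :
    dist (F x) (F y) ≤ η s * η t * dist (F p) (F v) :=
  calc dist (F x) (F y) ≤ η s * dist (F p) (F x) := by
        rw [dist_comm (F p)]; exact hF x y p s hs hxy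
    _ ≤ η s * (η t * dist (F p) (F v)) := mul_le_mul_of_nonneg_left (hF p x v t ht hpx) hηs
    _ = η s * η t * dist (F p) (F v) := (mul_assoc _ _ _).symm

theorem norm_firstCoords_le_two_mul_dist {N : ℕ} {x y : EuclideanSpace ℝ (Fin (N + 2))}
    (h : |lastCoord N x - lastCoord N y| ≥
      (1 / 2) * max ‖firstCoords N x‖ ‖firstCoords N y‖) :
    ‖firstCoords N x‖ ≤ 2 * dist x y := by
  have hlast : |lastCoord N x - lastCoord N y| ≤ dist x y := PiLp.dist_apply_le x y _
  linarith [le_max_left ‖firstCoords N x‖ ‖firstCoords N y‖]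

theorem firstCoords_add_single_zero (N : ℕ) (x : EuclideanSpace ℝ (Fin (N + 2))) (t : ℝ) :
    firstCoords N (x + EuclideanSpace.single 0 t) =
      firstCoords N x + EuclideanSpace.single 0 t := by
  ext i
  simp [firstCoords, Fin.castSucc_eq_zero_iff]

theorem exists_pair_off_axis {N : ℕ} (x : EuclideanSpace ℝ (Fin (N + 2))) {d : ℝ}
    (hd : 0 ≤ d) (hx : ‖firstCoords N x‖ ≤ 2 * d) :
    ∃ p v : EuclideanSpace ℝ (Fin (N + 2)), dist x p = 3 * d ∧ dist p v = 1 / 3 * d ∧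
      d ≤ ‖firstCoords N p‖ ∧ ‖firstCoords N p‖ ≤ 5 * d := by
  refine ⟨x + EuclideanSpace.single 0 (3 * d),
    x + EuclideanSpace.single 0 (3 * d) + EuclideanSpace.single 0 (1 / 3 * d), ?_, ?_, ?_⟩
  · rw [dist_comm, dist_eq_norm, add_sub_cancel_left, PiLp.norm_single,
      Real.norm_of_nonneg (by positivity)]
  · rw [dist_comm, dist_eq_norm, add_sub_cancel_left, PiLp.norm_single,
      Real.norm_of_nonneg (by positivity)]
  set e := EuclideanSpace.single (0 : Fin (N + 1)) (3 * d)
  have he : ‖e‖ = 3 * d := by rw [PiLp.norm_single, Real.norm_of_nonneg (by positivity)]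
  rw [firstCoords_add_single_zero]
  constructor
  · linarith [norm_le_add_norm_add' (firstCoords N x) e]
  · linarith [norm_add_le (firstCoords N x) e]

theorem snowflake_bounds_of_scaled_bounds {β γ lam c k d r M : ℝ} (hβ₀ : 0 ≤ β)
    (hβ₁ : β ≤ 1) (hβγ : β + γ = 1) (hlam : 0 < lam) (hc : 1 ≤ c) (hd : 0 < d)
    (hdr : d ≤ r) (hrc : r ≤ c * d) (hM : 0 ≤ M) (hlow : lam⁻¹ * (k * d) ≤ r ^ β * M)
    (hup : r ^ β * M ≤ lam * (k * d)) :
    k * d ^ γ ≤ c * lam * M ∧ M ≤ lam * k * d ^ γ := by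
  have hdβ : 0 < d ^ β := Real.rpow_pos_of_pos hd β
  have hsplit : d ^ β * d ^ γ = d := by rw [← Real.rpow_add hd, hβγ, Real.rpow_one]
  have hrβ : r ^ β ≤ c * d ^ β :=
    calc r ^ β ≤ (c * d) ^ β := Real.rpow_le_rpow (hd.le.trans hdr) hrc hβ₀
      _ = c ^ β * d ^ β := Real.mul_rpow (by linarith) hd.le
      _ ≤ c * d ^ β := by
        gcongr
        simpa using Real.rpow_le_rpow_of_exponent_le hc hβ₁
  constructor
  · rw [inv_mul_le_iff₀ hlam] at hlow
    refine le_of_mul_le_mul_left ?_ hdβ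
    calc d ^ β * (k * d ^ γ) = k * d := by linear_combination k * hsplit
      _ ≤ lam * (r ^ β * M) := hlow
      _ ≤ lam * (c * d ^ β * M) := by gcongr
      _ = d ^ β * (c * lam * M) := by ring
  · refine le_of_mul_le_mul_left ?_ hdβ
    calc d ^ β * M ≤ r ^ β * M := by gcongr
      _ ≤ lam * (k * d) := hup
      _ = d ^ β * (lam * k * d ^ γ) := by linear_combination -(lam * k) * hsplit

theorem inv_mul_le_and_le_mul_of_le_mul {A B D s : ℝ} (hA : 0 ≤ A) (hB : 0 ≤ B) (hD : 0 ≤ D)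
    (hs : 0 ≤ s) (hDs : D ≤ A * s) (hsD : s ≤ B * D) :
    (1 + A + B)⁻¹ * s ≤ D ∧ D ≤ (1 + A + B) * s := by
  constructor
  · rw [inv_mul_le_iff₀ (by positivity)]
    nlinarith
  · nlinarith

theorem stmt_8_general (N : ℕ) (α lam : ℝ) (hα : 0 ≤ α) (hlam : 1 < lam)
    (F : EuclideanSpace ℝ (Fin (N + 2)) → EuclideanSpace ℝ (Fin (N + 2)))
    (η : ℝ → ℝ) (hη₀ : η 0 = 0) (hηmono : StrictMonoOn η (Set.Ici 0))
    (hqs : ∀ x a b : EuclideanSpace ℝ (Fin (N + 2)), ∀ t : ℝ, 0 < t →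
      ‖x - a‖ ≤ t * ‖x - b‖ → ‖F x - F a‖ ≤ η t * ‖F x - F b‖)
    (hbl : ∀ x : EuclideanSpace ℝ (Fin (N + 2)), ‖firstCoords N x‖ ≠ 0 →
      ∀ u ∈ ball x (‖firstCoords N x‖ / 2), ∀ v ∈ ball x (‖firstCoords N x‖ / 2),
        lam⁻¹ * ‖u - v‖ ≤ ‖firstCoords N x‖ ^ (α / (1 + α)) * ‖F u - F v‖ ∧
        ‖firstCoords N x‖ ^ (α / (1 + α)) * ‖F u - F v‖ ≤ lam * ‖u - v‖) :
    ∃ lam' : ℝ, 1 < lam' ∧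
      ∀ x y : EuclideanSpace ℝ (Fin (N + 2)),
        |lastCoord N x - lastCoord N y| ≥
          (1 / 2) * max ‖firstCoords N x‖ ‖firstCoords N y‖ →
        lam'⁻¹ * ‖x - y‖ ^ (1 / (1 + α)) ≤ ‖F x - F y‖ ∧
        ‖F x - F y‖ ≤ lam' * ‖x - y‖ ^ (1 / (1 + α)) := by
  have hlam₀ : 0 < lam := by linarith
  have hβ₀ : 0 ≤ α / (1 + α) := by positivity
  have hβ₁ : α / (1 + α) ≤ 1 := by rw [div_le_one (by linarith)]; linarith
  have hβγ : α / (1 + α) + 1 / (1 + α) = 1 := by field_simp; ring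
  have hη : ∀ t, 0 < t → 0 < η t := fun t ht =>
    hη₀ ▸ hηmono (le_refl (0 : ℝ)) ht.le ht
  have hF : QuasisymmetricWith η F := fun x a b t ht h => by
    simpa only [dist_eq_norm] using hqs x a b t ht (by simpa only [dist_eq_norm] using h)
  have hη₁ := hη (1 / 2) (by norm_num)
  have hη₂ := hη 9 (by norm_num)
  have hη₃ := hη (1 / 9) (by norm_num)
  have hη₄ := hη 3 (by norm_num)
  have hA : 0 < η (1 / 2) * η 9 * (lam / 3) := by positivity
  have hB : 0 < 15 * lam * (η (1 / 9) * η 3) := by positivity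
  refine ⟨1 + η (1 / 2) * η 9 * (lam / 3) + 15 * lam * (η (1 / 9) * η 3), by linarith,
    fun x y hxy => ?_⟩
  simp only [← dist_eq_norm]
  rcases eq_or_ne x y with rfl | hne
  · rw [dist_self, dist_self, Real.zero_rpow (by positivity)]
    simp
  have hd : 0 < dist x y := dist_pos.2 hne
  obtain ⟨p, v, hxp, hpv, hdr, hrc⟩ :=
    exists_pair_off_axis x hd.le (norm_firstCoords_le_two_mul_dist hxy)
  have hr : 0 < ‖firstCoords N p‖ := hd.trans_le hdr
  have hv : v ∈ ball p (‖firstCoords N p‖ / 2) := by rw [mem_ball, dist_comm, hpv]; linarith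
  obtain ⟨hlow, hup⟩ := hbl p hr.ne' p (mem_ball_self (by positivity)) v hv
  rw [← dist_eq_norm, ← dist_eq_norm, hpv] at hlow hup
  obtain ⟨hMlow, hMup⟩ := snowflake_bounds_of_scaled_bounds hβ₀ hβ₁ hβγ hlam₀
    (by norm_num) hd hdr hrc dist_nonneg hlow hup
  have hFxy := hF.dist_le_mul_mul_dist (by norm_num) (by norm_num) hη₁.le
    (show dist x y ≤ 1 / 2 * dist x p by rw [hxp]; linarith)
    (show dist p x ≤ 9 * dist p v by rw [dist_comm, hxp, hpv]; linarith)
  have hFpv := hF.dist_le_mul_mul_dist (by norm_num) (by norm_num) hη₃.le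
    (show dist p v ≤ 1 / 9 * dist p x by rw [hpv, dist_comm p, hxp]; linarith)
    (show dist x p ≤ 3 * dist x y by rw [hxp])
  refine inv_mul_le_and_le_mul_of_le_mul hA.le hB.le dist_nonneg (by positivity) ?_ ?_
  · calc dist (F x) (F y) ≤ η (1 / 2) * η 9 * (lam * (1 / 3) * dist x y ^ (1 / (1 + α))) :=
          hFxy.trans (by gcongr)
      _ = η (1 / 2) * η 9 * (lam / 3) * dist x y ^ (1 / (1 + α)) := by ring
  · calc dist x y ^ (1 / (1 + α)) ≤ 15 * lam * dist (F p) (F v) := by linarith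
      _ ≤ 15 * lam * (η (1 / 9) * η 3 * dist (F x) (F y)) := by gcongr
      _ = 15 * lam * (η (1 / 9) * η 3) * dist (F x) (F y) := by ring

/-- Corollary 4.2: a quasisymmetric map which is locally a rescaled bi-Lipschitz map
away from the axis `{x' = 0}` is `(1/(1+α))`-snowflaking for pairs of points whose
vertical separation dominates. -/
theorem stmt_8 (N : ℕ) (α lam : ℝ) (hα : 0 ≤ α) (hlam : 1 < lam)
    (F : EuclideanSpace ℝ (Fin (N + 2)) → EuclideanSpace ℝ (Fin (N + 2)))
    (hhomeo : Continuous F ∧ Function.Bijective F)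
    (η : ℝ → ℝ) (hη₀ : η 0 = 0) (hηmono : StrictMonoOn η (Set.Ici 0))
    (hηcont : ContinuousOn η (Set.Ici 0)) (hηsurj : Set.Ici (0:ℝ) ⊆ η '' Set.Ici 0)
    (hqs : ∀ x a b : EuclideanSpace ℝ (Fin (N + 2)), ∀ t : ℝ, 0 < t →
      ‖x - a‖ ≤ t * ‖x - b‖ → ‖F x - F a‖ ≤ η t * ‖F x - F b‖)
    (hbl : ∀ x : EuclideanSpace ℝ (Fin (N + 2)), ‖firstCoords N x‖ ≠ 0 →
      ∀ u ∈ ball x (‖firstCoords N x‖ / 2), ∀ v ∈ ball x (‖firstCoords N x‖ / 2),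
        lam⁻¹ * ‖u - v‖ ≤ ‖firstCoords N x‖ ^ (α / (1 + α)) * ‖F u - F v‖ ∧
        ‖firstCoords N x‖ ^ (α / (1 + α)) * ‖F u - F v‖ ≤ lam * ‖u - v‖) :
    ∃ lam' : ℝ, 1 < lam' ∧
      ∀ x y : EuclideanSpace ℝ (Fin (N + 2)),
        |lastCoord N x - lastCoord N y| ≥
          (1 / 2) * max ‖firstCoords N x‖ ‖firstCoords N y‖ →
        lam'⁻¹ * ‖x - y‖ ^ (1 / (1 + α)) ≤ ‖F x - F y‖ ∧
        ‖F x - F y‖ ≤ lam' * ‖x - y‖ ^ (1 / (1 + α)) :=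
  stmt_8_general N α lam hα hlam F η hη₀ hηmono hqs hbl
end

section
/- Let N ≥ 0, n ≥ 1 be integers and M = 9^{n(N+2)}. Let M' = (M-5)^{N+1}/2^{N+1}. Then 2(M-3)M' ≥ (M^{N+2-1/n} - A)/2, where A = M + (M-3)(M-5)·((M-5)^{N} - 2^{N})/(2^{N+1}(M-7)). In particular, 2(M-3)M' = (M-3)(M-5)^{N+1}/2^N ≥ ((M-5)/2)^{N+2} ≥ M^{N+2-1/n}. -/
/-!
Write `M = 9^{n(N+2)}`. Since `M^{1/n} = 9^{N+2}`, the target `M^{N+2-1/n}` is exactly `(M/9)^{N+2}`,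
and `M/9 ≤ (M-5)/2` as soon as `M ≥ 45/7`. The remaining steps are elementary, and the correction
term `A` is nonnegative, so subtracting it only weakens the bound.
-/

open Real

theorem rpow_sub_one_div_of_pow_mul {b : ℝ} (hb : 0 < b) {n : ℕ} (hn : n ≠ 0) (m : ℕ) :
    (b ^ (n * m)) ^ ((m : ℝ) - 1 / n) = (b ^ (n * m) / b) ^ m := by
  have hroot : (b ^ (n * m)) ^ (1 / (n : ℝ)) = b ^ m := by
    rw [mul_comm, pow_mul, one_div, pow_rpow_inv_natCast (by positivity) hn]
  rw [rpow_sub (by positivity), rpow_natCast, hroot, div_pow]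

theorem counting_correction_nonneg {M : ℝ} (hM : 7 ≤ M) (N : ℕ) :
    0 ≤ M + (M - 3) * (M - 5) * ((M - 5) ^ N - 2 ^ N) / (2 ^ (N + 1) * (M - 7)) := by
  have hpow : (2 : ℝ) ^ N ≤ (M - 5) ^ N := pow_le_pow_left₀ (by norm_num) (by linarith) N
  have hfrac : 0 ≤ (M - 3) * (M - 5) * ((M - 5) ^ N - 2 ^ N) / (2 ^ (N + 1) * (M - 7)) := by
    apply div_nonneg
    · exact mul_nonneg (mul_nonneg (by linarith) (by linarith)) (by linarith)
    · exact mul_nonneg (by positivity) (by linarith)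
  linarith

theorem half_pow_le_mul_pow_div {M : ℝ} (hM : 5 ≤ M) (N : ℕ) :
    ((M - 5) / 2) ^ (N + 2) ≤ (M - 3) * (M - 5) ^ (N + 1) / 2 ^ N := by
  have hsplit : ((M - 5) / 2) ^ (N + 2) = (M - 5) / 4 * ((M - 5) ^ (N + 1) / 2 ^ N) := by
    rw [div_pow]
    field_simp
    ring
  have hnonneg : 0 ≤ (M - 5) ^ (N + 1) / 2 ^ N := by
    have : 0 ≤ M - 5 := by linarith
    positivity
  rw [hsplit, mul_div_assoc]
  exact mul_le_mul_of_nonneg_right (by linarith) hnonneg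

theorem div_nine_pow_le_half_pow {M : ℝ} (hM : 9 ≤ M) (m : ℕ) :
    (M / 9) ^ m ≤ ((M - 5) / 2) ^ m :=
  pow_le_pow_left₀ (by linarith) (by linarith) m

/-- The key counting inequality for the construction of the path `J_I(N,n)`,
with `M = 9^{n(N+2)}`. -/
theorem stmt_12 (N n : ℕ) (hn : 1 ≤ n) (M M' A : ℝ)
    (hM : M = 9 ^ (n * (N + 2)))
    (hM' : M' = (M - 5) ^ (N + 1) / 2 ^ (N + 1))
    (hA : A = M + (M - 3) * (M - 5) * ((M - 5) ^ N - 2 ^ N) / (2 ^ (N + 1) * (M - 7))) :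
    2 * (M - 3) * M' ≥ (M ^ ((N : ℝ) + 2 - 1 / n) - A) / 2 ∧
    2 * (M - 3) * M' = (M - 3) * (M - 5) ^ (N + 1) / 2 ^ N ∧
    (M - 3) * (M - 5) ^ (N + 1) / 2 ^ N ≥ ((M - 5) / 2) ^ (N + 2) ∧
    ((M - 5) / 2) ^ (N + 2) ≥ M ^ ((N : ℝ) + 2 - 1 / n) := by
  have hM9 : 9 ≤ M := hM ▸ le_self_pow₀ (by norm_num) (by positivity)
  have hrpow : M ^ ((N : ℝ) + 2 - 1 / n) = (M / 9) ^ (N + 2) := by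
    have := rpow_sub_one_div_of_pow_mul (b := 9) (by norm_num) (by omega : n ≠ 0) (N + 2)
    rw [hM]
    exact_mod_cast this
  have heq : 2 * (M - 3) * M' = (M - 3) * (M - 5) ^ (N + 1) / 2 ^ N := by
    rw [hM', pow_succ (2 : ℝ) N]
    field_simp
  have hmid := half_pow_le_mul_pow_div (by linarith : 5 ≤ M) N
  have hlast : ((M - 5) / 2) ^ (N + 2) ≥ M ^ ((N : ℝ) + 2 - 1 / n) :=
    hrpow ▸ div_nine_pow_le_half_pow hM9 (N + 2)
  have hA0 : 0 ≤ A := hA ▸ counting_correction_nonneg (by linarith) N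
  have hrpow0 : 0 ≤ M ^ ((N : ℝ) + 2 - 1 / n) := rpow_nonneg (by linarith) _
  exact ⟨by linarith, heq, hmid, hlast⟩
end

section
/- For integers n ≥ 1 and N ≥ 0, with M = 9^{n(N+2)}, the inequality ((M-5)/2)^{N+2} ≥ M^{N+2-1/n} holds. -/
/-! Since `M ^ (1 / n) = 9 ^ (N + 2)`, the right-hand side is `(M / 9) ^ (N + 2)`, and
`(M - 5) / 2 ≥ M / 9` as soon as `M ≥ 45 / 7`. -/

open Real

theorem Real.rpow_natCast_sub_one_div_of_eq_pow_pow {M b : ℝ} {k n : ℕ} (hb : 0 < b) (hn : n ≠ 0)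
    (hM : M = (b ^ k) ^ n) : M ^ ((k : ℝ) - 1 / n) = (M / b) ^ k := by
  have hroot : M ^ ((1 : ℝ) / n) = b ^ k := by
    rw [hM, one_div, pow_rpow_inv_natCast (by positivity) hn]
  rw [rpow_sub (by rw [hM]; positivity), hroot, rpow_natCast, div_pow]

/-- The core numerical inequality: for `M = 9^{n(N+2)}`,
`((M-5)/2)^{N+2} ≥ M^{N+2-1/n}`. -/
theorem stmt_13 (N n : ℕ) (hn : 1 ≤ n) (M : ℝ) (hM : M = 9 ^ (n * (N + 2))) :
    ((M - 5) / 2) ^ (N + 2) ≥ M ^ ((N : ℝ) + 2 - 1 / n) := by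
  have hM_pow : M = ((9 : ℝ) ^ (N + 2)) ^ n := by rw [hM, ← pow_mul, mul_comm]
  have hM_ge : (9 : ℝ) ≤ M := by
    rw [hM]
    exact le_self_pow₀ (by norm_num) (Nat.mul_ne_zero (by omega) (by omega))
  have hexp : M ^ ((N : ℝ) + 2 - 1 / n) = (M / 9) ^ (N + 2) := by
    exact_mod_cast rpow_natCast_sub_one_div_of_eq_pow_pow (by norm_num) (by omega) hM_pow
  rw [ge_iff_le, hexp]
  exact pow_le_pow_left₀ (by positivity) (by linarith) _
end

section
/- Let α ≥ 0 and let x = (x₁, x₂), y = (y₁, y₂) ∈ ℝ² with |x₁| ≥ |y₁| and |x₂ - y₂| ≥ |x₁|^{1+α}/2. Then the Grushin quasidistance satisfies d_α(x, y) ≤ C |x₂ - y₂|^{1/(1+α)} and d_α(x, y) ≥ C^{-1} |x₂ - y₂|^{1/(1+α)}, where C depends only on an upper bound for α. -/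
/-! Write `a = |x₂ - y₂|` and `p = 1/(1+α)`. The hypothesis `|x₁|^(1+α) ≤ 2a` gives
`|x₁| ≤ 2 a^p` and `|x₁|^α ≤ 2 a^(α p)`. The first bounds the horizontal term
`|x₁ - y₁| ≤ 2|x₁|` by `4 a^p`; the second shows that in the vertical term
`min (a^p) (a / |x₁|^α)` the entry `a / |x₁|^α` is at least `a^(1 - α p) / 2 = a^p / 2`,
so the vertical term alone is already comparable to `a^p`. -/

open Real

lemma rpow_le_two_mul_rpow_div {t b q r : ℝ} (ht : 0 ≤ t) (hb : 0 ≤ b) (hq : 0 < q)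
    (hr : 0 ≤ r) (hrq : r ≤ q) (h : t ^ q ≤ 2 * b) : t ^ r ≤ 2 * b ^ (r / q) :=
  calc t ^ r = (t ^ q) ^ (r / q) := by rw [← rpow_mul ht, mul_div_cancel₀ r hq.ne']
    _ ≤ (2 * b) ^ (r / q) := rpow_le_rpow (by positivity) h (by positivity)
    _ = 2 ^ (r / q) * b ^ (r / q) := mul_rpow zero_le_two hb
    _ ≤ 2 * b ^ (r / q) := by
      gcongr
      exact rpow_le_self_of_one_le one_le_two (div_le_one_of_le₀ hrq hq.le)

lemma grushinDist_le (α : ℝ) (x y : ℝ × ℝ) :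
    grushinDist α x y ≤ |x.1 - y.1| + |x.2 - y.2| ^ (1 / (1 + α)) := by
  unfold grushinDist
  gcongr
  split_ifs
  exacts [le_rfl, min_le_left _ _]

lemma rpow_div_two_le_grushinDist {α : ℝ} (hα : 0 ≤ α) {x y : ℝ × ℝ}
    (h : |x.1| ^ (1 + α) ≤ 2 * |x.2 - y.2|) :
    |x.2 - y.2| ^ (1 / (1 + α)) / 2 ≤ grushinDist α x y := by
  set a := |x.2 - y.2|
  have ha : 0 ≤ a := abs_nonneg _
  have hap : 0 ≤ a ^ (1 / (1 + α)) := rpow_nonneg ha _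
  unfold grushinDist
  refine le_add_of_nonneg_of_le (abs_nonneg _) ?_
  split_ifs with hx
  · linarith
  refine le_min (by linarith) ?_
  have hxα : 0 < |x.1| ^ α := rpow_pos_of_pos (abs_pos.mpr hx) α
  have hpow : |x.1| ^ α ≤ 2 * a ^ (α / (1 + α)) :=
    rpow_le_two_mul_rpow_div (abs_nonneg _) ha (by positivity) hα (by linarith) h
  have hexp : 1 / (1 + α) + α / (1 + α) = 1 := by field_simp
  rw [le_div_iff₀ hxα]
  calc a ^ (1 / (1 + α)) / 2 * |x.1| ^ α ≤ a ^ (1 / (1 + α)) * a ^ (α / (1 + α)) := by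
        nlinarith
    _ = a := by rw [← rpow_add' ha (by rw [hexp]; exact one_ne_zero), hexp, rpow_one]

theorem stmt_17_general (m : ℝ) :
    ∃ C : ℝ, 1 < C ∧ ∀ α ∈ Set.Icc (0 : ℝ) m, ∀ x₁ x₂ y₁ y₂ : ℝ,
      |y₁| ≤ |x₁| → |x₁| ^ (1 + α) / 2 ≤ |x₂ - y₂| →
      grushinDist α (x₁, x₂) (y₁, y₂) ≤ C * |x₂ - y₂| ^ (1 / (1 + α)) ∧
      C⁻¹ * |x₂ - y₂| ^ (1 / (1 + α)) ≤ grushinDist α (x₁, x₂) (y₁, y₂) := by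
  refine ⟨5, by norm_num, ?_⟩
  rintro α ⟨hα, -⟩ x₁ x₂ y₁ y₂ hy hd
  have h : |x₁| ^ (1 + α) ≤ 2 * |x₂ - y₂| := by linarith
  have hap : 0 ≤ |x₂ - y₂| ^ (1 / (1 + α)) := rpow_nonneg (abs_nonneg _) _
  constructor
  · have hx : |x₁| ≤ 2 * |x₂ - y₂| ^ (1 / (1 + α)) := by
      simpa using rpow_le_two_mul_rpow_div (abs_nonneg _) (abs_nonneg _) (by positivity)
        zero_le_one (by linarith) h
    calc grushinDist α (x₁, x₂) (y₁, y₂) ≤ |x₁ - y₁| + |x₂ - y₂| ^ (1 / (1 + α)) :=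
          grushinDist_le α _ _
      _ ≤ |x₁| + |y₁| + |x₂ - y₂| ^ (1 / (1 + α)) := by gcongr; exact abs_sub _ _
      _ ≤ 5 * |x₂ - y₂| ^ (1 / (1 + α)) := by linarith
  · calc 5⁻¹ * |x₂ - y₂| ^ (1 / (1 + α)) ≤ |x₂ - y₂| ^ (1 / (1 + α)) / 2 := by linarith
      _ ≤ grushinDist α (x₁, x₂) (y₁, y₂) := rpow_div_two_le_grushinDist (x := (x₁, x₂)) (y := (y₁, y₂)) hα h

/-- Snowflake regime: when the vertical displacement dominates, the Grushin
quasidistance is comparable to `|x₂-y₂|^{1/(1+α)}`, with constants depending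
only on the upper bound `m` for `α`. -/
theorem stmt_17 (m : ℝ) (hm : 0 ≤ m) :
    ∃ C : ℝ, 1 < C ∧ ∀ α ∈ Set.Icc (0 : ℝ) m, ∀ x₁ x₂ y₁ y₂ : ℝ,
      |y₁| ≤ |x₁| → |x₁| ^ (1 + α) / 2 ≤ |x₂ - y₂| →
      grushinDist α (x₁, x₂) (y₁, y₂) ≤ C * |x₂ - y₂| ^ (1 / (1 + α)) ∧
      C⁻¹ * |x₂ - y₂| ^ (1 / (1 + α)) ≤ grushinDist α (x₁, x₂) (y₁, y₂) :=
  stmt_17_general m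
end
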